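/- arXiv:1205.1193 — 2 statements merged into one kernel-verified Lean document; each statement's English description precedes it below -/
import Mathlib

section
/- Let n ≥ 3 and 2 ≤ d ≤ n−1 be integers. There exists a constant C > 0 such that for every measurable function f : (0,∞) → [0,∞], the Abel transform A_d⁻ f(s) = (cosh s)^{−1} ∫_s^∞ f(r) (1 − tanh²s/tanh²r)^{(d−2)/2} sinh^{d−1} r dr satisfies the weak-type bound sup_{λ>0} λ · ν({u > 0 : A_d⁻ f(u) > λ})^{1/(n−1)} ≤ C ‖f‖_{L^{(n−1)/(d−1),1}((0,∞), sinh^{n−1} r dr)}, where ν is the measure sinh^{n−d−1} u cosh^d u du on (0,∞). -/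
/-!
Since `d ≥ 2`, the factor `(1 - tanh² u / tanh² r) ^ ((d - 2) / 2)` is at most `1`, so
`A_d⁻ f(u) ≤ (cosh u)⁻¹ ∫₀^∞ f sinh^{d-1}`. By the layer-cake formula, this integral is at most
`‖f‖_{L^{p,1}(sinh^{n-1})}`, `p = (n-1)/(d-1)`, as soon as
`∫_E sinh^{d-1} ≤ p (∫_E sinh^{n-1})^{1/p}` for every set `E`; this follows by splitting `E` at
the level `sinh r = (∫_E sinh^{n-1})^{1/(n-1)}`. Hence `A_d⁻ f(u) > λ` forces
`e^u ≤ 2 cosh u ≤ 2‖f‖/λ`, and `ν(u ≤ a) ≤ e^{(n-1)a}` because the density of `ν` is at most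
`cosh^{n-1} u ≤ e^{(n-1)u}`.
-/

open MeasureTheory Set Real
open scoped ENNReal

/-- The Lorentz `L^{p,1}` norm of `f` with respect to the measure `μ`:
`‖f‖_{L^{p,1}(μ)} = p ∫_0^∞ μ({x : f x > λ})^{1/p} dλ`. -/
noncomputable def lorentzNorm (μ : Measure ℝ) (p : ℝ) (f : ℝ → ℝ≥0∞) : ℝ≥0∞ :=
  ENNReal.ofReal p *
    ∫⁻ l in Set.Ioi (0 : ℝ), (μ {t | ENNReal.ofReal l < f t}) ^ (1 / p)

theorem Real.monotone_tanh : Monotone tanh := by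
  intro x y hxy
  by_contra! hlt
  have := artanh_lt_artanh (neg_one_lt_tanh y) (tanh_lt_one x) hlt
  rw [artanh_tanh, artanh_tanh] at this
  linarith

theorem Real.cosh_le_exp {x : ℝ} (hx : 0 ≤ x) : cosh x ≤ exp x := by
  rw [cosh_eq]
  linarith [exp_le_exp.mpr (neg_le_self hx)]

theorem Real.exp_le_two_mul_cosh (x : ℝ) : exp x ≤ 2 * cosh x := by
  rw [cosh_eq]
  linarith [exp_pos (-x)]

theorem setLIntegral_Ioc_ofReal_eq_sub {g G : ℝ → ℝ} {a b : ℝ} (hab : a ≤ b)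
    (hG : ∀ x, HasDerivAt G (g x) x) (hg : Continuous g) (hg0 : ∀ x ∈ Ioc a b, 0 ≤ g x) :
    ∫⁻ x in Ioc a b, ENNReal.ofReal (g x) = ENNReal.ofReal (G b - G a) := by
  rw [← intervalIntegral.integral_eq_sub_of_hasDerivAt (fun x _ => hG x)
      (hg.intervalIntegrable a b), intervalIntegral.integral_of_le hab,
    ofReal_integral_eq_lintegral_ofReal hg.integrableOn_Ioc
      ((ae_restrict_iff' measurableSet_Ioc).mpr (ae_of_all _ hg0))]

theorem volume_Ioi_zero_inter_setOf_ofReal_lt (x : ℝ≥0∞) :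
    volume (Ioi 0 ∩ {l : ℝ | ENNReal.ofReal l < x}) = x := by
  induction x with
  | top => simp
  | coe x =>
    have : Ioi 0 ∩ {l : ℝ | ENNReal.ofReal l < x} = Ioo 0 (x : ℝ) := by
      ext l
      simp only [mem_inter_iff, mem_Ioi, mem_Ioo, and_congr_right_iff]
      intro hl
      rw [← ENNReal.ofReal_coe_nnreal]
      exact ENNReal.ofReal_lt_ofReal_iff_of_nonneg hl.le
    simp [this]

theorem lintegral_eq_lintegral_meas_ofReal_lt {α : Type*} [MeasurableSpace α] (μ : Measure α)
    [SFinite μ] {f : α → ℝ≥0∞} (hf : Measurable f) :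
    ∫⁻ x, f x ∂μ = ∫⁻ l in Ioi 0, μ {x | ENNReal.ofReal l < f x} := by
  set A := {p : α × ℝ | ENNReal.ofReal p.2 < f p.1}
  have hA : MeasurableSet A := measurableSet_lt (by fun_prop) (by fun_prop)
  calc ∫⁻ x, f x ∂μ = ∫⁻ x, (∫⁻ l in Ioi (0 : ℝ), A.indicator 1 (x, l)) ∂μ := by
        refine lintegral_congr fun x => ?_
        rw [← volume_Ioi_zero_inter_setOf_ofReal_lt (f x), inter_comm,
          ← Measure.restrict_apply (measurableSet_lt (by fun_prop) measurable_const)]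
        exact (lintegral_indicator_one (measurableSet_lt (by fun_prop) measurable_const)).symm
    _ = ∫⁻ l in Ioi (0 : ℝ), ∫⁻ x, A.indicator 1 (x, l) ∂μ :=
        lintegral_lintegral_swap (f := fun x l => A.indicator 1 (x, l))
          (measurable_one.indicator hA).aemeasurable
    _ = ∫⁻ l in Ioi 0, μ {x | ENNReal.ofReal l < f x} :=
        lintegral_congr fun l =>
          lintegral_indicator_one (s := {x | ENNReal.ofReal l < f x})
            (measurableSet_lt measurable_const hf)

theorem lintegral_le_lorentzNorm {μ ν : Measure ℝ} [SFinite ν] {p : ℝ}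
    (h : ∀ E, MeasurableSet E → ν E ≤ ENNReal.ofReal p * μ E ^ (1 / p))
    {f : ℝ → ℝ≥0∞} (hf : Measurable f) :
    ∫⁻ x, f x ∂ν ≤ lorentzNorm μ p f := by
  rw [lintegral_eq_lintegral_meas_ofReal_lt ν hf, lorentzNorm,
    ← lintegral_const_mul' _ _ ENNReal.ofReal_ne_top]
  exact lintegral_mono fun l => h _ (measurableSet_lt measurable_const hf)

noncomputable def sinhPowMeasure (k : ℕ) : Measure ℝ :=
  (volume.restrict (Ioi 0)).withDensity fun r => ENNReal.ofReal (sinh r ^ k)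

instance (k : ℕ) : SFinite (sinhPowMeasure k) := by
  unfold sinhPowMeasure
  infer_instance

theorem sinhPowMeasure_apply (k : ℕ) {E : Set ℝ} (hE : MeasurableSet E) :
    sinhPowMeasure k E = ∫⁻ r in E ∩ Ioi 0, ENNReal.ofReal (sinh r ^ k) := by
  rw [sinhPowMeasure, withDensity_apply _ hE, Measure.restrict_restrict hE]

theorem sinhPowMeasure_absolutelyContinuous (k K : ℕ) : sinhPowMeasure k ≪ sinhPowMeasure K :=
  (withDensity_absolutelyContinuous _ _).trans <| withDensity_absolutelyContinuous'
    (by fun_prop) ((ae_restrict_iff' measurableSet_Ioi).mpr <| ae_of_all _ fun r hr => by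
      have := sinh_pos_iff.mpr hr
      positivity)

theorem sinhPowMeasure_setOf_sinh_lt_le {k : ℕ} (hk : k ≠ 0) {T : ℝ} (hT : 0 ≤ T) :
    sinhPowMeasure k {r | sinh r < T} ≤ ENNReal.ofReal (T ^ k / k) := by
  have hset : {r | sinh r < T} ∩ Ioi 0 = Ioo 0 (arsinh T) := by
    ext r
    rw [mem_inter_iff, mem_Ioo, and_comm, ← sinh_lt_sinh (x := r), sinh_arsinh]
    rfl
  have hderiv (x : ℝ) : HasDerivAt (fun x => sinh x ^ k / k) (sinh x ^ (k - 1) * cosh x) x := by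
    refine (((hasDerivAt_sinh x).fun_pow k).div_const (k : ℝ)).congr_deriv ?_
    field_simp [Nat.cast_ne_zero.mpr hk]
  calc sinhPowMeasure k {r | sinh r < T}
      = ∫⁻ r in Ioo 0 (arsinh T), ENNReal.ofReal (sinh r ^ k) := by
        rw [sinhPowMeasure_apply k (measurableSet_lt (by fun_prop) measurable_const), hset]
    _ ≤ ∫⁻ r in Ioc 0 (arsinh T), ENNReal.ofReal (sinh r ^ (k - 1) * cosh r) := by
        refine (lintegral_mono_set Ioo_subset_Ioc_self).trans <|
          setLIntegral_mono' measurableSet_Ioc fun r hr => ENNReal.ofReal_le_ofReal ?_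
        have := (sinh_pos_iff.mpr hr.1).le
        rw [← pow_sub_one_mul hk]
        gcongr
        exact (sinh_lt_cosh r).le
    _ = ENNReal.ofReal (T ^ k / k) := by
        rw [setLIntegral_Ioc_ofReal_eq_sub (arsinh_nonneg_iff.mpr hT) hderiv (by fun_prop)
          fun r hr => by have := (sinh_pos_iff.mpr hr.1).le; positivity]
        simp [sinh_arsinh, hk]

theorem sinhPowMeasure_sdiff_setOf_sinh_lt_le {k K : ℕ} (hkK : k ≤ K) {E : Set ℝ}
    (hE : MeasurableSet E) {T : ℝ} (hT : 0 < T) :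
    sinhPowMeasure k (E \ {r | sinh r < T}) ≤
      sinhPowMeasure K E / ENNReal.ofReal (T ^ (K - k)) := by
  set c := ENNReal.ofReal (T ^ (K - k))
  have hmeas : MeasurableSet (E \ {r | sinh r < T}) :=
    hE.diff (measurableSet_lt (by fun_prop) measurable_const)
  have hpoint : ∀ r ∈ E \ {r | sinh r < T},
      ENNReal.ofReal (sinh r ^ k) ≤ ENNReal.ofReal (sinh r ^ K) / c := by
    rintro r ⟨-, hr⟩
    have hTr : T ≤ sinh r := not_lt.mp hr
    rw [← ENNReal.ofReal_div_of_pos (by positivity)]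
    refine ENNReal.ofReal_le_ofReal ?_
    rw [le_div_iff₀ (by positivity), ← Nat.add_sub_cancel' hkK, pow_add, Nat.add_sub_cancel_left]
    exact mul_le_mul_of_nonneg_left
      (pow_le_pow_left₀ hT.le hTr _) (pow_nonneg (hT.le.trans hTr) _)
  calc sinhPowMeasure k (E \ {r | sinh r < T})
      = ∫⁻ r in E \ {r | sinh r < T}, ENNReal.ofReal (sinh r ^ k) ∂volume.restrict (Ioi 0) :=
        withDensity_apply _ hmeas
    _ ≤ ∫⁻ r in E \ {r | sinh r < T}, ENNReal.ofReal (sinh r ^ K) / c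
          ∂volume.restrict (Ioi 0) := setLIntegral_mono' hmeas hpoint
    _ ≤ ∫⁻ r in E, ENNReal.ofReal (sinh r ^ K) / c ∂volume.restrict (Ioi 0) :=
        lintegral_mono_set sdiff_subset
    _ = sinhPowMeasure K E / c := by
        have hc : c⁻¹ ≠ ⊤ := ENNReal.inv_ne_top.mpr (ENNReal.ofReal_pos.mpr (by positivity)).ne'
        simp_rw [div_eq_mul_inv]
        rw [lintegral_mul_const' _ _ hc, sinhPowMeasure, withDensity_apply _ hE]

theorem sinhPowMeasure_le_add {k K : ℕ} (hk : k ≠ 0) (hkK : k ≤ K) {E : Set ℝ}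
    (hE : MeasurableSet E) {T : ℝ} (hT : 0 < T) :
    sinhPowMeasure k E ≤
      ENNReal.ofReal (T ^ k / k) + sinhPowMeasure K E / ENNReal.ofReal (T ^ (K - k)) :=
  (measure_le_inter_add_sdiff _ E {r | sinh r < T}).trans <| add_le_add
    ((measure_mono inter_subset_right).trans (sinhPowMeasure_setOf_sinh_lt_le hk hT.le))
    (sinhPowMeasure_sdiff_setOf_sinh_lt_le hkK hE hT)

theorem sinhPowMeasure_le_ofReal_mul_rpow {k K : ℕ} (hk : k ≠ 0) (hkK : k < K) {E : Set ℝ}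
    (hE : MeasurableSet E) :
    sinhPowMeasure k E ≤ ENNReal.ofReal (K / k) * sinhPowMeasure K E ^ (1 / ((K : ℝ) / k)) := by
  have hk0 : (0 : ℝ) < k := by exact_mod_cast Nat.pos_of_ne_zero hk
  have hK0 : (0 : ℝ) < K := by exact_mod_cast hk.bot_lt.trans hkK
  rw [one_div_div]
  rcases eq_or_ne (sinhPowMeasure K E) 0 with h0 | h0
  · rw [sinhPowMeasure_absolutelyContinuous k K h0]
    exact zero_le
  rcases eq_or_ne (sinhPowMeasure K E) ⊤ with htop | htop
  · rw [htop, ENNReal.top_rpow_of_pos (by positivity), ENNReal.mul_top (by positivity)]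
    exact le_top
  -- Splitting at `T = s`, where `s ^ K = sinhPowMeasure K E`, makes both terms about `s ^ k`.
  obtain ⟨s, hs, hsE⟩ : ∃ s : ℝ, 0 < s ∧ sinhPowMeasure K E = ENNReal.ofReal (s ^ K) :=
    ⟨(sinhPowMeasure K E).toReal ^ (K : ℝ)⁻¹, by positivity [ENNReal.toReal_pos h0 htop], by
      rw [Real.rpow_inv_natCast_pow ENNReal.toReal_nonneg (by omega), ENNReal.ofReal_toReal htop]⟩
  have hsK : s ^ K = s ^ k * s ^ (K - k) := by rw [← pow_add, Nat.add_sub_cancel' hkK.le]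
  calc sinhPowMeasure k E
      ≤ ENNReal.ofReal (s ^ k / k) + ENNReal.ofReal (s ^ K) / ENNReal.ofReal (s ^ (K - k)) :=
        hsE ▸ sinhPowMeasure_le_add hk hkK.le hE hs
    _ = ENNReal.ofReal ((1 / k + 1) * s ^ k) := by
        rw [← ENNReal.ofReal_div_of_pos (by positivity), ← ENNReal.ofReal_add (by positivity)
          (by positivity), hsK]
        congr 1
        field_simp
    _ ≤ ENNReal.ofReal (K / k * s ^ k) := by
        refine ENNReal.ofReal_le_ofReal (mul_le_mul_of_nonneg_right ?_ (by positivity))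
        rw [div_add_one hk0.ne', div_le_div_iff_of_pos_right hk0]
        exact_mod_cast (by omega : 1 + k ≤ K)
    _ = ENNReal.ofReal (K / k) * ENNReal.ofReal (s ^ K) ^ ((k : ℝ) / K) := by
        rw [ENNReal.ofReal_rpow_of_nonneg (by positivity) (by positivity), ← ENNReal.ofReal_mul
          (by positivity), ← Real.rpow_natCast s K, ← Real.rpow_mul hs.le,
          mul_div_cancel₀ _ hK0.ne', Real.rpow_natCast]
    _ = ENNReal.ofReal (K / k) * sinhPowMeasure K E ^ ((k : ℝ) / K) := by rw [hsE]

theorem lintegral_sinhPowMeasure_le_lorentzNorm {k K : ℕ} (hk : k ≠ 0) (hkK : k < K)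
    {f : ℝ → ℝ≥0∞} (hf : Measurable f) :
    ∫⁻ r, f r ∂sinhPowMeasure k ≤ lorentzNorm (sinhPowMeasure K) (K / k) f :=
  lintegral_le_lorentzNorm (fun _ hE => sinhPowMeasure_le_ofReal_mul_rpow hk hkK hE) hf

noncomputable def sinhCoshPowMeasure (a b : ℕ) : Measure ℝ :=
  (volume.restrict (Ioi 0)).withDensity fun u => ENNReal.ofReal (sinh u ^ a * cosh u ^ b)

theorem sinhCoshPowMeasure_Iic_le (a b : ℕ) (hab : a + b ≠ 0) (x : ℝ) :
    sinhCoshPowMeasure a b (Iic x) ≤ ENNReal.ofReal (exp x) ^ (a + b) := by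
  have hIic : sinhCoshPowMeasure a b (Iic x) =
      ∫⁻ t in Ioc 0 x, ENNReal.ofReal (sinh t ^ a * cosh t ^ b) := by
    rw [sinhCoshPowMeasure, withDensity_apply _ measurableSet_Iic,
      Measure.restrict_restrict measurableSet_Iic, inter_comm, Ioi_inter_Iic]
  rcases le_or_gt x 0 with hx | hx
  · simp [hIic, Ioc_eq_empty_of_le hx]
  set m := a + b
  have hpoint : ∀ t ∈ Ioc 0 x, sinh t ^ a * cosh t ^ b ≤ m * exp t ^ (m - 1) * exp t := by
    intro t ht
    have hsinh := (sinh_pos_iff.mpr ht.1).le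
    have hm : (1 : ℝ) ≤ m := by exact_mod_cast Nat.one_le_iff_ne_zero.mpr hab
    calc sinh t ^ a * cosh t ^ b ≤ exp t ^ a * exp t ^ b := by
          gcongr
          · exact (sinh_lt_cosh t).le.trans (cosh_le_exp ht.1.le)
          · exact cosh_le_exp ht.1.le
      _ = 1 * exp t ^ (m - 1) * exp t := by rw [← pow_add, one_mul, pow_sub_one_mul hab]
      _ ≤ m * exp t ^ (m - 1) * exp t := by gcongr
  calc sinhCoshPowMeasure a b (Iic x)
      ≤ ∫⁻ t in Ioc 0 x, ENNReal.ofReal (m * exp t ^ (m - 1) * exp t) :=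
        hIic ▸ setLIntegral_mono' measurableSet_Ioc fun t ht =>
          ENNReal.ofReal_le_ofReal (hpoint t ht)
    _ = ENNReal.ofReal (exp x ^ m - exp 0 ^ m) :=
        setLIntegral_Ioc_ofReal_eq_sub hx.le (fun t => (hasDerivAt_exp t).fun_pow m)
          (by fun_prop) fun t _ => by positivity
    _ ≤ ENNReal.ofReal (exp x) ^ m := by
        rw [← ENNReal.ofReal_pow (exp_pos x).le]
        exact ENNReal.ofReal_le_ofReal (by simp)

theorem sinhCoshPowMeasure_setOf_exp_le (a b : ℕ) (hab : a + b ≠ 0) (K : ℝ≥0∞) :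
    sinhCoshPowMeasure a b {u | ENNReal.ofReal (exp u) ≤ K} ≤ K ^ (a + b) := by
  rcases eq_or_ne K ⊤ with rfl | hK
  · rw [ENNReal.top_pow hab]
    exact le_top
  rcases eq_or_ne K 0 with rfl | hK0
  · simp [(exp_pos _).not_ge]
  have hK' : 0 < K.toReal := ENNReal.toReal_pos hK0 hK
  have hset : {u | ENNReal.ofReal (exp u) ≤ K} = Iic (log K.toReal) := by
    ext u
    rw [mem_Iic, le_log_iff_exp_le hK', ← ENNReal.ofReal_le_iff_le_toReal hK]
    rfl
  rw [hset]
  refine (sinhCoshPowMeasure_Iic_le a b hab _).trans_eq ?_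
  rw [exp_log hK', ENNReal.ofReal_toReal hK]

noncomputable def abelTransform (d : ℕ) (f : ℝ → ℝ≥0∞) (u : ℝ) : ℝ≥0∞ :=
  (ENNReal.ofReal (cosh u))⁻¹ *
    ∫⁻ r in Ioi u, f r * ENNReal.ofReal
      ((1 - tanh u ^ 2 / tanh r ^ 2) ^ (((d : ℝ) - 2) / 2) * sinh r ^ (d - 1))

theorem rpow_one_sub_tanh_sq_div_tanh_sq_le_one {u r e : ℝ} (hu : 0 ≤ u) (hur : u ≤ r)
    (he : 0 ≤ e) : (1 - tanh u ^ 2 / tanh r ^ 2) ^ e ≤ 1 := by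
  have htanh : 0 ≤ tanh u := tanh_zero ▸ monotone_tanh hu
  have hratio : tanh u ^ 2 / tanh r ^ 2 ≤ 1 :=
    div_le_one_of_le₀ (pow_le_pow_left₀ htanh (monotone_tanh hur) 2) (sq_nonneg _)
  have hratio0 : 0 ≤ tanh u ^ 2 / tanh r ^ 2 := by positivity
  exact rpow_le_one (by linarith) (by linarith) he

theorem abelTransform_le {d : ℕ} (hd : 2 ≤ d) {f : ℝ → ℝ≥0∞} (hf : Measurable f) {u : ℝ}
    (hu : 0 ≤ u) :
    abelTransform d f u ≤ (ENNReal.ofReal (cosh u))⁻¹ * ∫⁻ r, f r ∂sinhPowMeasure (d - 1) := by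
  have he : (0 : ℝ) ≤ ((d : ℝ) - 2) / 2 := by
    have : (2 : ℝ) ≤ d := by exact_mod_cast hd
    linarith
  rw [abelTransform, sinhPowMeasure, lintegral_withDensity_eq_lintegral_mul _ (by fun_prop) hf]
  gcongr _ * ?_
  calc ∫⁻ r in Ioi u, f r * ENNReal.ofReal
          ((1 - tanh u ^ 2 / tanh r ^ 2) ^ (((d : ℝ) - 2) / 2) * sinh r ^ (d - 1))
      ≤ ∫⁻ r in Ioi u, f r * ENNReal.ofReal (sinh r ^ (d - 1)) := by
        refine setLIntegral_mono' measurableSet_Ioi fun r hr => ?_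
        have hsinh := (sinh_pos_iff.mpr (hu.trans_lt hr)).le
        gcongr
        exact mul_le_of_le_one_left (by positivity)
          (rpow_one_sub_tanh_sq_div_tanh_sq_le_one hu hr.le he)
    _ ≤ ∫⁻ r in Ioi 0, f r * ENNReal.ofReal (sinh r ^ (d - 1)) :=
        lintegral_mono_set (Ioi_subset_Ioi hu)
    _ = _ := lintegral_congr fun r => mul_comm _ _

theorem sinhCoshPowMeasure_setOf_lt_abelTransform_le (a b : ℕ) (hab : a + b ≠ 0) {d : ℕ}
    (hd : 2 ≤ d) {f : ℝ → ℝ≥0∞} (hf : Measurable f) {l : ℝ} (hl : 0 < l) :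
    sinhCoshPowMeasure a b {u | ENNReal.ofReal l < abelTransform d f u} ≤
      (2 * (∫⁻ r, f r ∂sinhPowMeasure (d - 1)) / ENNReal.ofReal l) ^ (a + b) := by
  set I := ∫⁻ r, f r ∂sinhPowMeasure (d - 1)
  refine (measure_mono_ae ?_).trans (sinhCoshPowMeasure_setOf_exp_le a b hab _)
  filter_upwards [(withDensity_absolutelyContinuous _ _).ae_le
    (ae_restrict_mem measurableSet_Ioi)] with u (hu : 0 < u) (hlt : ENNReal.ofReal l < _)
  have hcosh : ENNReal.ofReal (cosh u) * ENNReal.ofReal l ≤ I := by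
    have := hlt.le.trans (abelTransform_le hd hf hu.le)
    rwa [← ENNReal.div_eq_inv_mul, ENNReal.le_div_iff_mul_le (by simp [cosh_pos]) (by simp),
      mul_comm] at this
  calc ENNReal.ofReal (exp u) ≤ ENNReal.ofReal (2 * cosh u) :=
        ENNReal.ofReal_le_ofReal (exp_le_two_mul_cosh u)
    _ ≤ 2 * I / ENNReal.ofReal l := by
        rw [ENNReal.ofReal_mul zero_le_two, ENNReal.ofReal_ofNat, mul_div_assoc]
        gcongr
        exact (ENNReal.le_div_iff_mul_le (.inl (ENNReal.ofReal_pos.mpr hl).ne')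
          (.inl ENNReal.ofReal_ne_top)).mpr hcosh

theorem abel_hyperbolic_weak_type_general (n d : ℕ) (hd : 2 ≤ d) (hdn : d ≤ n - 1) :
    ∃ C : ℝ, 0 < C ∧ ∀ f : ℝ → ℝ≥0∞, Measurable f →
      ∀ l : ℝ, 0 < l →
        ENNReal.ofReal l *
            (((volume.restrict (Set.Ioi (0 : ℝ))).withDensity
                (fun u => ENNReal.ofReal (Real.sinh u ^ (n - d - 1) * Real.cosh u ^ d)))
              {u | ENNReal.ofReal l <
                (ENNReal.ofReal (Real.cosh u))⁻¹ *
                  ∫⁻ r in Set.Ioi u,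
                    f r * ENNReal.ofReal
                      ((1 - Real.tanh u ^ 2 / Real.tanh r ^ 2) ^ (((d : ℝ) - 2) / 2) *
                        Real.sinh r ^ (d - 1))}) ^ (1 / ((n : ℝ) - 1)) ≤
          ENNReal.ofReal C *
            lorentzNorm
              ((volume.restrict (Set.Ioi (0 : ℝ))).withDensity
                (fun r => ENNReal.ofReal (Real.sinh r ^ (n - 1))))
              (((n : ℝ) - 1) / ((d : ℝ) - 1)) f := by
  refine ⟨2, two_pos, fun f hf l hl => ?_⟩
  set N := lorentzNorm (sinhPowMeasure (n - 1)) (((n : ℝ) - 1) / ((d : ℝ) - 1)) f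
  have hlorentz := lintegral_sinhPowMeasure_le_lorentzNorm (k := d - 1) (K := n - 1)
    (by omega) (by omega) hf
  rw [Nat.cast_pred (by omega), Nat.cast_pred (by omega)] at hlorentz
  have hweak := sinhCoshPowMeasure_setOf_lt_abelTransform_le (n - d - 1) d (by omega) hd hf hl
  rw [show n - d - 1 + d = n - 1 by omega] at hweak
  calc _ ≤ ENNReal.ofReal l * ((2 * N / ENNReal.ofReal l) ^ (n - 1)) ^ ((n - 1 : ℕ) : ℝ)⁻¹ := by
        rw [one_div, ← Nat.cast_pred (by omega : 0 < n)]
        gcongr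
        exact hweak.trans (by gcongr)
    _ = ENNReal.ofReal 2 * N := by
        rw [ENNReal.pow_rpow_inv_natCast (by omega), ENNReal.mul_div_cancel
          (ENNReal.ofReal_pos.mpr hl).ne' ENNReal.ofReal_ne_top, ENNReal.ofReal_ofNat]

/-- Weak-type `L^{(n−1)/(d−1),1} → L^{n−1,∞}` bound for the Abel transform
`A_d⁻ f(s) = (cosh s)^{−1} ∫_s^∞ f(r)(1 − tanh²s/tanh²r)^{(d−2)/2} sinh^{d−1} r dr`
on radial functions of `ℍⁿ`: for `n ≥ 3`, `2 ≤ d ≤ n−1` there is `C > 0` with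
`sup_{λ>0} λ · ν({u > 0 : A_d⁻ f(u) > λ})^{1/(n−1)}
  ≤ C ‖f‖_{L^{(n−1)/(d−1),1}((0,∞), sinh^{n−1} r dr)}`,
where `ν = sinh^{n−d−1} u cosh^d u du` on `(0,∞)`. -/
theorem abel_hyperbolic_weak_type (n d : ℕ) (hn : 3 ≤ n) (hd : 2 ≤ d) (hdn : d ≤ n - 1) :
    ∃ C : ℝ, 0 < C ∧ ∀ f : ℝ → ℝ≥0∞, Measurable f →
      ∀ l : ℝ, 0 < l →
        ENNReal.ofReal l *
            (((volume.restrict (Set.Ioi (0 : ℝ))).withDensity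
                (fun u => ENNReal.ofReal (Real.sinh u ^ (n - d - 1) * Real.cosh u ^ d)))
              {u | ENNReal.ofReal l <
                (ENNReal.ofReal (Real.cosh u))⁻¹ *
                  ∫⁻ r in Set.Ioi u,
                    f r * ENNReal.ofReal
                      ((1 - Real.tanh u ^ 2 / Real.tanh r ^ 2) ^ (((d : ℝ) - 2) / 2) *
                        Real.sinh r ^ (d - 1))}) ^ (1 / ((n : ℝ) - 1)) ≤
          ENNReal.ofReal C *
            lorentzNorm
              ((volume.restrict (Set.Ioi (0 : ℝ))).withDensity
                (fun r => ENNReal.ofReal (Real.sinh r ^ (n - 1))))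
              (((n : ℝ) - 1) / ((d : ℝ) - 1)) f :=
  abel_hyperbolic_weak_type_general n d hd hdn
end

section
/- Let n ≥ 2 and 1 ≤ d ≤ n−1 be integers. There exists a constant C > 0 such that for every measurable set E ⊆ (0,1) and every θ ∈ (0, π/2), (cos θ)^{2−d} ∫_0^{cos θ} χ_E(u) (cos²θ − u²)^{(d−2)/2} du ≤ C (∫_0^1 χ_E(u) (1−u²)^{(n−2)/2} du)^{d/n}. -/
open MeasureTheory Set Real Filter Topology
open scoped ENNReal

/-!
Write `c = cos θ`, `e = (d - 2) / 2` and `b = (n - 2) / 2`. Near `u = c` the Abel kernel is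
`O((c - u) ^ e)`, while the weight `(1 - u²) ^ b` dominates `(c - u) ^ b`. Splitting `E` at
distance `τ` from `c`, the far part is at most `τ ^ (e - b)` times the weighted measure `m` of `E`
and the near part at most `τ ^ (e + 1) / (e + 1)`; for `τ = m ^ (2 / n)` both are `m ^ (d / n)`.
This needs `c ≥ 1 / 2` when `d > 2`; for `c ≤ 1 / 2` the kernel is at most `1` and the weight is
bounded below, so the integral is `O(m)`, and `m ≤ 1`.
-/

/-- `∫⁻ u in E ∩ Ioo 0 c, abelKernel d c u` is `cos θ · A_d⁺ χ_E(θ)` for `c = cos θ`. -/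
noncomputable def abelKernel (d c u : ℝ) : ℝ := c ^ (2 - d) * (c ^ 2 - u ^ 2) ^ ((d - 2) / 2)

section AbelKernel

variable {d c u : ℝ}

theorem abelKernel_eq_mul_rpow_mul_rpow (hu : 0 ≤ u) (huc : u < c) :
    abelKernel d c u = c ^ (2 - d) * (c + u) ^ ((d - 2) / 2) * (c - u) ^ ((d - 2) / 2) := by
  rw [abelKernel, sq_sub_sq, mul_rpow (by linarith) (by linarith), mul_assoc]

theorem abelKernel_le_sub_rpow_of_le_two (hd : d ≤ 2) (hc : c ≤ 1) (hu : 0 ≤ u) (huc : u < c) :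
    abelKernel d c u ≤ (c - u) ^ ((d - 2) / 2) := by
  have hc0 : 0 < c := hu.trans_lt huc
  have hsum : (c + u) ^ ((d - 2) / 2) ≤ c ^ ((d - 2) / 2) :=
    rpow_le_rpow_of_nonpos hc0 (by linarith) (by linarith)
  calc abelKernel d c u
      ≤ c ^ (2 - d) * c ^ ((d - 2) / 2) * (c - u) ^ ((d - 2) / 2) := by
        rw [abelKernel_eq_mul_rpow_mul_rpow hu huc]; gcongr
    _ = c ^ ((2 - d) / 2) * (c - u) ^ ((d - 2) / 2) := by rw [← rpow_add hc0]; ring_nf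
    _ ≤ (c - u) ^ ((d - 2) / 2) :=
        mul_le_of_le_one_left (by positivity) (rpow_le_one hc0.le hc (by linarith))

theorem abelKernel_le_sub_rpow_of_two_le (hd : 2 ≤ d) (hc : 1 / 2 ≤ c) (hu : 0 ≤ u) (huc : u < c) :
    abelKernel d c u ≤ 2 ^ (d - 2) * (c - u) ^ ((d - 2) / 2) := by
  have hc0 : 0 < c := hu.trans_lt huc
  have hinv : c ^ ((2 - d) / 2) ≤ 2 ^ ((d - 2) / 2) := by
    calc c ^ ((2 - d) / 2) ≤ (1 / 2) ^ ((2 - d) / 2) :=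
          rpow_le_rpow_of_nonpos (by norm_num) hc (by linarith)
      _ = 2 ^ ((d - 2) / 2) := by
          rw [one_div, inv_rpow zero_le_two, ← rpow_neg zero_le_two]; ring_nf
  calc abelKernel d c u
      ≤ c ^ (2 - d) * (2 * c) ^ ((d - 2) / 2) * (c - u) ^ ((d - 2) / 2) := by
        rw [abelKernel_eq_mul_rpow_mul_rpow hu huc]; gcongr; linarith
    _ = 2 ^ ((d - 2) / 2) * c ^ ((2 - d) / 2) * (c - u) ^ ((d - 2) / 2) := by
        rw [mul_rpow zero_le_two hc0.le, mul_left_comm, ← rpow_add hc0]; ring_nf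
    _ ≤ 2 ^ ((d - 2) / 2) * 2 ^ ((d - 2) / 2) * (c - u) ^ ((d - 2) / 2) := by gcongr
    _ = 2 ^ (d - 2) * (c - u) ^ ((d - 2) / 2) := by rw [← rpow_add two_pos]; ring_nf

theorem abelKernel_le_one (hd : 2 ≤ d) (hu : 0 ≤ u) (huc : u < c) : abelKernel d c u ≤ 1 := by
  have hc0 : 0 < c := hu.trans_lt huc
  calc abelKernel d c u ≤ c ^ (2 - d) * (c ^ 2) ^ ((d - 2) / 2) := by
        unfold abelKernel; gcongr
        · nlinarith
        · exact sub_le_self _ (sq_nonneg u)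
    _ = 1 := by
        rw [← rpow_natCast, ← rpow_mul hc0.le, ← rpow_add hc0]; ring_nf; exact rpow_zero c

end AbelKernel

theorem setLIntegral_Ico_sub_rpow {c τ e : ℝ} (he : -1 < e) (hτ : 0 ≤ τ) :
    ∫⁻ u in Ico (c - τ) c, ENNReal.ofReal ((c - u) ^ e) =
      ENNReal.ofReal (τ ^ (e + 1) / (e + 1)) := by
  have hle : c - τ ≤ c := by linarith
  have hint : IntervalIntegrable (fun u => (c - u) ^ e) volume (c - τ) c := by
    simpa using ((intervalIntegral.intervalIntegrable_rpow' he :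
      IntervalIntegrable (fun x : ℝ => x ^ e) volume 0 τ).comp_sub_left c).symm
  rw [setLIntegral_congr Ico_ae_eq_Ioc, ← ofReal_integral_eq_lintegral_ofReal
      ((intervalIntegrable_iff_integrableOn_Ioc_of_le hle).1 hint)
      (ae_restrict_of_forall_mem measurableSet_Ioc fun u hu => rpow_nonneg (sub_nonneg.2 hu.2) _),
    ← intervalIntegral.integral_of_le hle, intervalIntegral.integral_comp_sub_left (· ^ e),
    sub_self, sub_sub_cancel, integral_rpow (Or.inl he), zero_rpow (by linarith), sub_zero]

theorem setLIntegral_sub_rpow_le_add {S : Set ℝ} (hS : MeasurableSet S) {c e b τ : ℝ}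
    (hSc : S ⊆ Iio c) (he : -1 < e) (heb : e ≤ b) (hτ : 0 < τ) {w : ℝ → ℝ}
    (hw : ∀ u ∈ S, (c - u) ^ b ≤ w u) :
    ∫⁻ u in S, ENNReal.ofReal ((c - u) ^ e) ≤
      ENNReal.ofReal (τ ^ (e - b)) * (∫⁻ u in S, ENNReal.ofReal (w u)) +
        ENNReal.ofReal (τ ^ (e + 1) / (e + 1)) := by
  rw [← lintegral_inter_add_sdiff (fun u => ENNReal.ofReal ((c - u) ^ e)) S
    (measurableSet_Iio (a := c - τ))]
  refine add_le_add ?_ ?_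
  · calc ∫⁻ u in S ∩ Iio (c - τ), ENNReal.ofReal ((c - u) ^ e)
        ≤ ∫⁻ u in S ∩ Iio (c - τ), ENNReal.ofReal (τ ^ (e - b)) * ENNReal.ofReal (w u) := by
          refine setLIntegral_mono' (hS.inter measurableSet_Iio) fun u ⟨huS, huτ⟩ => ?_
          have hcu : τ < c - u := by linarith [mem_Iio.1 huτ]
          rw [← ENNReal.ofReal_mul (by positivity), ← sub_add_cancel e b,
            rpow_add (hτ.trans hcu), add_sub_cancel_right]
          exact ENNReal.ofReal_le_ofReal (mul_le_mul (rpow_le_rpow_of_nonpos hτ hcu.le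
            (by linarith)) (hw u huS) (rpow_nonneg (hτ.trans hcu).le _) (by positivity))
      _ ≤ ∫⁻ u in S, ENNReal.ofReal (τ ^ (e - b)) * ENNReal.ofReal (w u) :=
          lintegral_mono_set inter_subset_left
      _ = ENNReal.ofReal (τ ^ (e - b)) * ∫⁻ u in S, ENNReal.ofReal (w u) :=
          lintegral_const_mul' _ _ ENNReal.ofReal_ne_top
  · calc ∫⁻ u in S \ Iio (c - τ), ENNReal.ofReal ((c - u) ^ e)
        ≤ ∫⁻ u in Ico (c - τ) c, ENNReal.ofReal ((c - u) ^ e) :=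
          lintegral_mono_set fun u hu => ⟨not_lt.1 hu.2, hSc hu.1⟩
      _ = ENNReal.ofReal (τ ^ (e + 1) / (e + 1)) := setLIntegral_Ico_sub_rpow he hτ.le

theorem setLIntegral_sub_rpow_le {S : Set ℝ} (hS : MeasurableSet S) {c e b : ℝ}
    (hSc : S ⊆ Iio c) (he : -1 < e) (heb : e ≤ b) {w : ℝ → ℝ}
    (hw : ∀ u ∈ S, (c - u) ^ b ≤ w u) :
    ∫⁻ u in S, ENNReal.ofReal ((c - u) ^ e) ≤
      ENNReal.ofReal (1 + 1 / (e + 1)) *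
        (∫⁻ u in S, ENNReal.ofReal (w u)) ^ ((e + 1) / (b + 1)) := by
  have hsplit := fun τ (hτ : 0 < τ) => setLIntegral_sub_rpow_le_add hS hSc he heb hτ hw
  generalize ∫⁻ u in S, ENNReal.ofReal (w u) = m at hsplit ⊢
  have he1 : 0 < e + 1 := by linarith
  have hb : 0 < b + 1 := by linarith
  have hp : 0 < (e + 1) / (b + 1) := div_pos he1 hb
  have hC : 0 < 1 + 1 / (e + 1) := by positivity
  rcases eq_or_ne m 0 with rfl | hm0
  · -- letting `τ → 0` in the split bound
    have hlim : Tendsto (fun τ : ℝ => ENNReal.ofReal (τ ^ (e + 1) / (e + 1))) (𝓝[>] 0) (𝓝 0) :=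
      (ENNReal.continuous_ofReal.comp ((continuous_rpow_const he1.le).div_const _)
        |>.tendsto' 0 0 (by simp [zero_rpow he1.ne'])).mono_left nhdsWithin_le_nhds
    refine (ge_of_tendsto hlim (eventually_nhdsWithin_of_forall fun τ hτ => ?_)).trans zero_le
    simpa using hsplit τ hτ
  rcases eq_or_ne m ⊤ with rfl | hmt
  · rw [ENNReal.top_rpow_of_pos hp, ENNReal.mul_top (ENNReal.ofReal_pos.2 hC).ne']
    exact le_top
  obtain ⟨M, hM, rfl⟩ : ∃ M : ℝ, 0 < M ∧ ENNReal.ofReal M = m :=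
    ⟨m.toReal, ENNReal.toReal_pos hm0 hmt, ENNReal.ofReal_toReal hmt⟩
  -- `τ = M ^ (1 / (b + 1))` balances the two terms of the split bound
  refine (hsplit _ (rpow_pos_of_pos hM (1 / (b + 1)))).trans_eq ?_
  have h1 : 1 / (b + 1) * (e - b) + 1 = (e + 1) / (b + 1) := by field_simp; ring
  have h2 : 1 / (b + 1) * (e + 1) = (e + 1) / (b + 1) := by field_simp
  rw [← ENNReal.ofReal_mul (by positivity), ← ENNReal.ofReal_add (by positivity)
    (div_nonneg (by positivity) he1.le), ENNReal.ofReal_rpow_of_pos hM,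
    ← ENNReal.ofReal_mul hC.le, ← rpow_mul hM.le,
    ← rpow_mul hM.le, ← rpow_add_one hM.ne', h1, h2]
  ring_nf

theorem setLIntegral_one_sub_sq_rpow_le_one {S : Set ℝ} (hS : S ⊆ Ioo 0 1) {b : ℝ} (hb : 0 ≤ b) :
    ∫⁻ u in S, ENNReal.ofReal ((1 - u ^ 2) ^ b) ≤ 1 := by
  calc ∫⁻ u in S, ENNReal.ofReal ((1 - u ^ 2) ^ b)
      ≤ ∫⁻ u in Ioo 0 1, ENNReal.ofReal ((1 - u ^ 2) ^ b) := lintegral_mono_set hS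
    _ ≤ ∫⁻ _ in Ioo (0 : ℝ) 1, 1 := setLIntegral_mono' measurableSet_Ioo fun u hu =>
        ENNReal.ofReal_le_one.2 (rpow_le_one (by nlinarith [hu.1, hu.2]) (by nlinarith) hb)
    _ = 1 := by simp

theorem setLIntegral_abelKernel_le {d n c : ℝ} (hd : 1 ≤ d) (hdn : d ≤ n) (hn : 2 ≤ n)
    (hc : c ≤ 1) {S : Set ℝ} (hS : MeasurableSet S) (hSc : S ⊆ Ioo 0 c) :
    ∫⁻ u in S, ENNReal.ofReal (abelKernel d c u) ≤
      ENNReal.ofReal (3 * 2 ^ n) *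
        (∫⁻ u in S, ENNReal.ofReal ((1 - u ^ 2) ^ ((n - 2) / 2))) ^ (d / n) := by
  set m := ∫⁻ u in S, ENNReal.ofReal ((1 - u ^ 2) ^ ((n - 2) / 2))
  have hS1 : S ⊆ Ioo 0 1 := fun u hu => ⟨(hSc hu).1, (hSc hu).2.trans_le hc⟩
  have h2n : 1 ≤ (2 : ℝ) ^ n := one_le_rpow one_le_two (by linarith)
  have hfactor : 1 + 2 / d ≤ 3 := by
    have : 2 / d ≤ 2 := by rw [div_le_iff₀ (by linarith)]; linarith
    linarith
  have hpow : ∫⁻ u in S, ENNReal.ofReal ((c - u) ^ ((d - 2) / 2)) ≤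
      ENNReal.ofReal (1 + 2 / d) * m ^ (d / n) := by
    have h := setLIntegral_sub_rpow_le hS (hSc.trans Ioo_subset_Iio_self) (by linarith)
      (by linarith : (d - 2) / 2 ≤ (n - 2) / 2) (w := fun u => (1 - u ^ 2) ^ ((n - 2) / 2))
      fun u hu => rpow_le_rpow (sub_nonneg.2 (hSc hu).2.le)
        (by nlinarith [(hSc hu).1, (hS1 hu).2]) (by linarith)
    have he : (d - 2) / 2 + 1 = d / 2 := by ring
    have hb : (n - 2) / 2 + 1 = n / 2 := by ring
    rwa [he, hb, one_div_div, div_div_div_cancel_right₀ two_ne_zero] at h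
  rcases le_total d 2 with hd2 | hd2
  · calc ∫⁻ u in S, ENNReal.ofReal (abelKernel d c u)
        ≤ ∫⁻ u in S, ENNReal.ofReal ((c - u) ^ ((d - 2) / 2)) :=
          setLIntegral_mono' hS fun u hu => ENNReal.ofReal_le_ofReal
            (abelKernel_le_sub_rpow_of_le_two hd2 hc (hSc hu).1.le (hSc hu).2)
      _ ≤ ENNReal.ofReal (1 + 2 / d) * m ^ (d / n) := hpow
      _ ≤ ENNReal.ofReal (3 * 2 ^ n) * m ^ (d / n) := by gcongr; nlinarith
  rcases le_total (1 / 2) c with hc2 | hc2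
  · calc ∫⁻ u in S, ENNReal.ofReal (abelKernel d c u)
        ≤ ∫⁻ u in S, ENNReal.ofReal (2 ^ (d - 2)) * ENNReal.ofReal ((c - u) ^ ((d - 2) / 2)) :=
          setLIntegral_mono' hS fun u hu => by
            rw [← ENNReal.ofReal_mul (by positivity)]
            exact ENNReal.ofReal_le_ofReal
              (abelKernel_le_sub_rpow_of_two_le hd2 hc2 (hSc hu).1.le (hSc hu).2)
      _ = ENNReal.ofReal (2 ^ (d - 2)) * ∫⁻ u in S, ENNReal.ofReal ((c - u) ^ ((d - 2) / 2)) :=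
          lintegral_const_mul' _ _ ENNReal.ofReal_ne_top
      _ ≤ ENNReal.ofReal (2 ^ (d - 2)) * (ENNReal.ofReal (1 + 2 / d) * m ^ (d / n)) := by
          gcongr
      _ ≤ ENNReal.ofReal (3 * 2 ^ n) * m ^ (d / n) := by
          rw [← mul_assoc, ← ENNReal.ofReal_mul (by positivity)]
          gcongr ENNReal.ofReal ?_ * _
          rw [mul_comm 3]
          exact mul_le_mul (rpow_le_rpow_of_exponent_le one_le_two (by linarith)) hfactor
            (by positivity) (by positivity)
  · have hm1 : m ≤ 1 := setLIntegral_one_sub_sq_rpow_le_one hS1 (by linarith)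
    calc ∫⁻ u in S, ENNReal.ofReal (abelKernel d c u)
        ≤ ∫⁻ u in S, ENNReal.ofReal (2 ^ ((n - 2) / 2)) *
            ENNReal.ofReal ((1 - u ^ 2) ^ ((n - 2) / 2)) :=
          setLIntegral_mono' hS fun u hu => by
            obtain ⟨hu0, huc⟩ := hSc hu
            rw [← ENNReal.ofReal_mul (by positivity), ← mul_rpow zero_le_two
              (by nlinarith [hS1 hu])]
            exact ENNReal.ofReal_le_ofReal ((abelKernel_le_one hd2 hu0.le huc).trans
              (one_le_rpow (by nlinarith) (by linarith)))
      _ = ENNReal.ofReal (2 ^ ((n - 2) / 2)) * m := lintegral_const_mul' _ _ ENNReal.ofReal_ne_top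
      _ ≤ ENNReal.ofReal (2 ^ ((n - 2) / 2)) * m ^ (d / n) := by
          gcongr
          calc m = m ^ (1 : ℝ) := (ENNReal.rpow_one m).symm
            _ ≤ m ^ (d / n) := ENNReal.rpow_le_rpow_of_exponent_ge hm1
                ((div_le_one (by linarith)).2 hdn)
      _ ≤ ENNReal.ofReal (3 * 2 ^ n) * m ^ (d / n) := by
          gcongr
          have : (2 : ℝ) ^ ((n - 2) / 2) ≤ 2 ^ n :=
            rpow_le_rpow_of_exponent_le one_le_two (by linarith)
          linarith

theorem abel_sphere_indicator_endpoint_general (n d : ℕ) (hd : 1 ≤ d)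
    (hdn : d ≤ n - 1) :
    ∃ C : ℝ, 0 < C ∧ ∀ E : Set ℝ, MeasurableSet E → E ⊆ Set.Ioo 0 1 →
      ∀ θ : ℝ, 0 < θ → θ < Real.pi / 2 →
        ENNReal.ofReal (Real.cos θ ^ ((2 : ℝ) - d)) *
            (∫⁻ u in E ∩ Set.Ioo 0 (Real.cos θ),
              ENNReal.ofReal ((Real.cos θ ^ 2 - u ^ 2) ^ (((d : ℝ) - 2) / 2))) ≤
          ENNReal.ofReal C *
            (∫⁻ u in E, ENNReal.ofReal ((1 - u ^ 2) ^ (((n : ℝ) - 2) / 2)))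
              ^ ((d : ℝ) / n) := by
  have hn : (2 : ℝ) ≤ n := by exact_mod_cast (by omega : 2 ≤ n)
  have hdn' : (d : ℝ) ≤ n := by exact_mod_cast (by omega : d ≤ n)
  refine ⟨3 * 2 ^ (n : ℝ), by positivity, fun E hE _ θ hθ0 hθ => ?_⟩
  have hc : 0 < cos θ := cos_pos_of_mem_Ioo ⟨by linarith [pi_pos], hθ⟩
  calc _ = ∫⁻ u in E ∩ Ioo 0 (cos θ), ENNReal.ofReal (abelKernel d (cos θ) u) := by
        rw [← lintegral_const_mul' _ _ ENNReal.ofReal_ne_top]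
        simp_rw [abelKernel, ENNReal.ofReal_mul (rpow_nonneg hc.le _)]
    _ ≤ _ := setLIntegral_abelKernel_le (by exact_mod_cast hd) hdn' hn (cos_le_one θ)
          (hE.inter measurableSet_Ioo) inter_subset_right
    _ ≤ _ := by gcongr; exact inter_subset_left

/-- Endpoint estimate on indicators for the Abel transform associated with the
`d`-dimensional totally geodesic Radon transform of even radial functions on `Sⁿ`:
for `n ≥ 2`, `1 ≤ d ≤ n−1` there is `C > 0` such that for every measurable
`E ⊆ (0,1)` and every `θ ∈ (0, π/2)`,
`(cos θ)^{2−d} ∫_0^{cos θ} χ_E(u)(cos²θ − u²)^{(d−2)/2} du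
  ≤ C (∫_0^1 χ_E(u)(1−u²)^{(n−2)/2} du)^{d/n}`. -/
theorem abel_sphere_indicator_endpoint (n d : ℕ) (hn : 2 ≤ n) (hd : 1 ≤ d)
    (hdn : d ≤ n - 1) :
    ∃ C : ℝ, 0 < C ∧ ∀ E : Set ℝ, MeasurableSet E → E ⊆ Set.Ioo 0 1 →
      ∀ θ : ℝ, 0 < θ → θ < Real.pi / 2 →
        ENNReal.ofReal (Real.cos θ ^ ((2 : ℝ) - d)) *
            (∫⁻ u in E ∩ Set.Ioo 0 (Real.cos θ),
              ENNReal.ofReal ((Real.cos θ ^ 2 - u ^ 2) ^ (((d : ℝ) - 2) / 2))) ≤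
          ENNReal.ofReal C *
            (∫⁻ u in E, ENNReal.ofReal ((1 - u ^ 2) ^ (((n : ℝ) - 2) / 2)))
              ^ ((d : ℝ) / n) :=
  abel_sphere_indicator_endpoint_general n d hd hdn
end
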